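/- Let d ≥ 1, τ > 0, R > 0, let ν be a probability measure on ℝ^d supported in [−R,R]^d, and let y ∈ [−R,R]^d. Define f_y(x) := log φ_{τ²}(x − y) − log p_{ν,τ}(x). Then f_y is differentiable on ℝ^d with ∇ f_y(x) = (y − m_{ν,τ}(x)) / τ², and consequently ‖∇ f_y(x)‖₂ ≤ 2R√d / τ² for every x ∈ ℝ^d; in particular f_y is (2R√d/τ²)-Lipschitz. -/

import Mathlib

/-!
The gradient of `log φ(x - y)` is `(y - x) / τ²`, and differentiating under the integral sign gives
`∇p = p (m - x) / τ²`, so `∇ log p = (m - x) / τ²` and `∇ f_y = (y - m) / τ²`. Differentiation under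
the integral is legitimate for every finite `ν` because `‖z‖ φ(z) ≤ τ (2πτ²)^(-d/2)` uniformly.
Both `y` and the posterior mean `m(x)`, an average of points of the support, lie in the ball of
radius `R√d`, which bounds the gradient by `2R√d / τ²`; the Lipschitz bound is then the mean value
inequality.
-/

open MeasureTheory

/-- Density of `N(0, τ² I_d)` on `ℝ^d`. -/
noncomputable def gphi (d : ℕ) (τ : ℝ) (z : EuclideanSpace ℝ (Fin d)) : ℝ :=
  (2 * Real.pi * τ ^ 2) ^ (-(d : ℝ) / 2) * Real.exp (-‖z‖ ^ 2 / (2 * τ ^ 2))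

/-- Density of `ν * N(0, τ² I_d)`. -/
noncomputable def pdens (d : ℕ) (τ : ℝ) (ν : Measure (EuclideanSpace ℝ (Fin d)))
    (x : EuclideanSpace ℝ (Fin d)) : ℝ :=
  ∫ y, gphi d τ (x - y) ∂ν

/-- Gaussian posterior mean of `ν` at `x`. -/
noncomputable def postMean (d : ℕ) (τ : ℝ) (ν : Measure (EuclideanSpace ℝ (Fin d)))
    (x : EuclideanSpace ℝ (Fin d)) : EuclideanSpace ℝ (Fin d) :=
  (pdens d τ ν x)⁻¹ • ∫ y, gphi d τ (x - y) • y ∂ν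

theorem EuclideanSpace.norm_le_mul_sqrt_card_of_forall_abs_le {ι : Type*} [Fintype ι]
    {v : EuclideanSpace ℝ ι} {R : ℝ} (hR : 0 ≤ R) (hv : ∀ i, |v i| ≤ R) :
    ‖v‖ ≤ R * √(Fintype.card ι) := by
  rw [EuclideanSpace.norm_eq, ← Real.sqrt_sq hR, ← Real.sqrt_mul (sq_nonneg R)]
  gcongr
  calc ∑ i, ‖v i‖ ^ 2 ≤ ∑ _i : ι, R ^ 2 := by
        gcongr with i
        exact (Real.norm_eq_abs _).trans_le (hv i)
    _ = R ^ 2 * Fintype.card ι := by simp [mul_comm]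

theorem mul_exp_neg_sq_div_le {τ : ℝ} (hτ : 0 < τ) (t : ℝ) :
    t * Real.exp (-t ^ 2 / (2 * τ ^ 2)) ≤ τ := by
  have hexp : t ≤ τ * Real.exp (t ^ 2 / (2 * τ ^ 2)) :=
    calc t ≤ τ * (t ^ 2 / (2 * τ ^ 2) + 1) := by
          field_simp
          nlinarith [sq_nonneg (t - τ)]
      _ ≤ τ * Real.exp (t ^ 2 / (2 * τ ^ 2)) := by
          gcongr
          exact Real.add_one_le_exp _
  rw [neg_div, Real.exp_neg, ← div_eq_mul_inv, div_le_iff₀ (Real.exp_pos _)]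
  exact hexp

variable {d : ℕ} {τ : ℝ}

theorem gphi_pos (hτ : 0 < τ) (z : EuclideanSpace ℝ (Fin d)) : 0 < gphi d τ z := by
  unfold gphi; positivity

theorem gphi_nonneg (z : EuclideanSpace ℝ (Fin d)) : 0 ≤ gphi d τ z := by
  unfold gphi; positivity

theorem gphi_le (z : EuclideanSpace ℝ (Fin d)) :
    gphi d τ z ≤ (2 * Real.pi * τ ^ 2) ^ (-(d : ℝ) / 2) := by
  unfold gphi
  refine mul_le_of_le_one_right (by positivity) (Real.exp_le_one_iff.2 ?_)
  exact div_nonpos_of_nonpos_of_nonneg (neg_nonpos.2 (by positivity)) (by positivity)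

theorem gphi_mul_norm_le (hτ : 0 < τ) (z : EuclideanSpace ℝ (Fin d)) :
    gphi d τ z * ‖z‖ ≤ (2 * Real.pi * τ ^ 2) ^ (-(d : ℝ) / 2) * τ := by
  unfold gphi
  rw [mul_assoc, mul_comm (Real.exp _)]
  exact mul_le_mul_of_nonneg_left (mul_exp_neg_sq_div_le hτ ‖z‖) (by positivity)

@[fun_prop]
theorem continuous_gphi : Continuous (gphi d τ) := by
  unfold gphi; fun_prop

theorem hasGradientAt_gphi_sub (u x : EuclideanSpace ℝ (Fin d)) :
    HasGradientAt (fun x => gphi d τ (x - u)) ((-(τ ^ 2)⁻¹) • gphi d τ (x - u) • (x - u)) x := by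
  have hsq := ((hasFDerivAt_id x).sub_const u).norm_sq
  have h := ((hsq.const_mul (-(2 * τ ^ 2)⁻¹)).exp).const_mul
    ((2 * Real.pi * τ ^ 2) ^ (-(d : ℝ) / 2))
  have hfun : (fun x => gphi d τ (x - u)) = fun x =>
      (2 * Real.pi * τ ^ 2) ^ (-(d : ℝ) / 2) * Real.exp (-(2 * τ ^ 2)⁻¹ * ‖id x - u‖ ^ 2) := by
    funext x
    simp only [gphi, id]
    ring_nf
  rw [hasGradientAt_iff_hasFDerivAt, hfun]
  refine h.congr_fderiv ?_
  ext v
  simp [gphi]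
  ring_nf

section Integrals

variable {ν : Measure (EuclideanSpace ℝ (Fin d))} [IsFiniteMeasure ν]

theorem integrable_gphi_sub (x : EuclideanSpace ℝ (Fin d)) :
    Integrable (fun u => gphi d τ (x - u)) ν :=
  .of_bound (by fun_prop) _ (ae_of_all _ fun u => by
    rw [Real.norm_of_nonneg (gphi_nonneg _)]; exact gphi_le _)

theorem integrable_gphi_sub_smul_sub (hτ : 0 < τ) (x : EuclideanSpace ℝ (Fin d)) :
    Integrable (fun u => gphi d τ (x - u) • (x - u)) ν :=
  .of_bound (by fun_prop) _ (ae_of_all _ fun u => by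
    rw [norm_smul, Real.norm_of_nonneg (gphi_nonneg _)]; exact gphi_mul_norm_le hτ _)

theorem integrable_gphi_sub_smul (hτ : 0 < τ) (x : EuclideanSpace ℝ (Fin d)) :
    Integrable (fun u => gphi d τ (x - u) • u) ν := by
  have h := ((integrable_gphi_sub (τ := τ) x).smul_const x).sub
    (integrable_gphi_sub_smul_sub (ν := ν) hτ x)
  refine h.congr (ae_of_all _ fun u => ?_)
  simp only [Pi.sub_apply, smul_sub, sub_sub_cancel]

theorem pdens_pos (hτ : 0 < τ) [NeZero ν] (x : EuclideanSpace ℝ (Fin d)) :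
    0 < pdens d τ ν x := by
  rw [pdens, integral_pos_iff_support_of_nonneg (fun u => gphi_nonneg _) (integrable_gphi_sub x),
    Function.support_eq_univ fun u => (gphi_pos hτ _).ne']
  exact Measure.measure_univ_pos.2 (NeZero.ne ν)

theorem hasGradientAt_pdens (hτ : 0 < τ) (x : EuclideanSpace ℝ (Fin d)) :
    HasGradientAt (pdens d τ ν) ((-(τ ^ 2)⁻¹) • ∫ u, gphi d τ (x - u) • (x - u) ∂ν) x := by
  let F' (x u : EuclideanSpace ℝ (Fin d)) : StrongDual ℝ (EuclideanSpace ℝ (Fin d)) :=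
    innerSL ℝ ((-(τ ^ 2)⁻¹) • gphi d τ (x - u) • (x - u))
  have hF' : ∀ x u, ‖F' x u‖ ≤ (τ ^ 2)⁻¹ * ((2 * Real.pi * τ ^ 2) ^ (-(d : ℝ) / 2) * τ) := by
    intro x u
    rw [innerSL_apply_norm, norm_smul, norm_smul, norm_neg, norm_inv,
      Real.norm_of_nonneg (sq_nonneg τ), Real.norm_of_nonneg (gphi_nonneg _)]
    exact mul_le_mul_of_nonneg_left (gphi_mul_norm_le hτ _) (by positivity)
  have h := hasFDerivAt_integral_of_dominated_of_fderiv_le (μ := ν) (F' := F') Filter.univ_mem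
    (Filter.Eventually.of_forall fun x => (integrable_gphi_sub x).aestronglyMeasurable)
    (integrable_gphi_sub x) (by fun_prop) (ae_of_all _ fun u x _ => hF' x u) (integrable_const _)
    (ae_of_all _ fun u x _ => (hasGradientAt_gphi_sub u x).hasFDerivAt)
  have hF'int :
      ∫ u, F' x u ∂ν = innerSL ℝ ((-(τ ^ 2)⁻¹) • ∫ u, gphi d τ (x - u) • (x - u) ∂ν) := by
    rw [← integral_smul]
    exact (innerSL ℝ).integral_comp_comm ((integrable_gphi_sub_smul_sub hτ x).smul (-(τ ^ 2)⁻¹))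
  rw [hF'int] at h
  exact h

theorem integral_gphi_sub_smul_sub (hτ : 0 < τ) {x : EuclideanSpace ℝ (Fin d)}
    (hx : pdens d τ ν x ≠ 0) :
    ∫ u, gphi d τ (x - u) • (x - u) ∂ν = pdens d τ ν x • (x - postMean d τ ν x) := by
  simp_rw [smul_sub]
  rw [integral_sub ((integrable_gphi_sub x).smul_const x) (integrable_gphi_sub_smul hτ x),
    integral_smul_const, postMean, smul_inv_smul₀ hx, pdens]

theorem hasGradientAt_log_pdens (hτ : 0 < τ) [NeZero ν] (x : EuclideanSpace ℝ (Fin d)) :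
    HasGradientAt (fun x => Real.log (pdens d τ ν x)) ((τ ^ 2)⁻¹ • (postMean d τ ν x - x)) x := by
  have hx := (pdens_pos (ν := ν) hτ x).ne'
  have h := (hasGradientAt_pdens (ν := ν) hτ x).hasFDerivAt.log hx
  rw [hasGradientAt_iff_hasFDerivAt]
  refine h.congr_fderiv ?_
  rw [← map_smul, integral_gphi_sub_smul_sub hτ hx]
  congr 1
  rw [smul_comm, inv_smul_smul₀ hx, neg_smul, ← smul_neg, neg_sub]

theorem norm_postMean_le (hτ : 0 < τ) [NeZero ν] {M : ℝ} (hM : ∀ᵐ u ∂ν, ‖u‖ ≤ M)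
    (x : EuclideanSpace ℝ (Fin d)) : ‖postMean d τ ν x‖ ≤ M := by
  have hx := pdens_pos (ν := ν) hτ x
  have hI : ‖∫ u, gphi d τ (x - u) • u ∂ν‖ ≤ M * pdens d τ ν x := by
    rw [pdens, ← integral_const_mul]
    refine norm_integral_le_of_norm_le ((integrable_gphi_sub x).const_mul M) ?_
    filter_upwards [hM] with u hu
    rw [norm_smul, Real.norm_of_nonneg (gphi_nonneg _), mul_comm]
    exact mul_le_mul_of_nonneg_right hu (gphi_nonneg _)
  rw [postMean, norm_smul, norm_inv, Real.norm_of_nonneg hx.le, inv_mul_le_iff₀ hx, mul_comm]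
  exact hI

theorem hasGradientAt_log_gphi_sub_sub_log_pdens (hτ : 0 < τ) [NeZero ν]
    (y x : EuclideanSpace ℝ (Fin d)) :
    HasGradientAt (fun x => Real.log (gphi d τ (x - y)) - Real.log (pdens d τ ν x))
      ((τ ^ 2)⁻¹ • (y - postMean d τ ν x)) x := by
  have hφ := (hasGradientAt_gphi_sub y x).hasFDerivAt.log (gphi_pos hτ _).ne'
  have h := hφ.sub (hasGradientAt_log_pdens (ν := ν) hτ x).hasFDerivAt
  rw [hasGradientAt_iff_hasFDerivAt]
  refine h.congr_fderiv ?_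
  rw [← map_smul, ← map_sub]
  congr 1
  rw [smul_comm, inv_smul_smul₀ (gphi_pos hτ _).ne']
  module

end Integrals

theorem lipschitzWith_of_hasGradientAt_of_norm_le {F : Type*} [NormedAddCommGroup F]
    [InnerProductSpace ℝ F] [CompleteSpace F] {f : F → ℝ} {f' : F → F} {C : ℝ}
    (hf : ∀ x, HasGradientAt f (f' x) x) (hC : ∀ x, ‖f' x‖ ≤ C) :
    LipschitzWith (Real.toNNReal C) f := by
  refine lipschitzWith_of_nnnorm_fderiv_le (fun x => (hf x).differentiableAt) fun x => ?_
  rw [(hf x).hasFDerivAt.fderiv, ← NNReal.coe_le_coe, coe_nnnorm, LinearIsometryEquiv.norm_map]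
  exact (hC x).trans (Real.le_coe_toNNReal C)

theorem stmt16_general (d : ℕ) (τ R : ℝ) (hτ : 0 < τ) (hR : 0 < R)
    (ν : Measure (EuclideanSpace ℝ (Fin d))) [IsProbabilityMeasure ν]
    (hsupp : ∀ᵐ y ∂ν, ∀ i, |y i| ≤ R)
    (y : EuclideanSpace ℝ (Fin d)) (hy : ∀ i, |y i| ≤ R) :
    Differentiable ℝ (fun x => Real.log (gphi d τ (x - y)) - Real.log (pdens d τ ν x)) ∧
    (∀ x, gradient (fun x => Real.log (gphi d τ (x - y)) - Real.log (pdens d τ ν x)) x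
        = (τ ^ 2)⁻¹ • (y - postMean d τ ν x)) ∧
    (∀ x, ‖gradient (fun x => Real.log (gphi d τ (x - y)) - Real.log (pdens d τ ν x)) x‖
        ≤ 2 * R * Real.sqrt d / τ ^ 2) ∧
    LipschitzWith (Real.toNNReal (2 * R * Real.sqrt d / τ ^ 2))
      (fun x => Real.log (gphi d τ (x - y)) - Real.log (pdens d τ ν x)) := by
  have hbox : ∀ v : EuclideanSpace ℝ (Fin d), (∀ i, |v i| ≤ R) → ‖v‖ ≤ R * √d := fun v hv => by
    simpa using EuclideanSpace.norm_le_mul_sqrt_card_of_forall_abs_le hR.le hv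
  have hgrad := hasGradientAt_log_gphi_sub_sub_log_pdens (ν := ν) hτ y
  have hbound : ∀ x, ‖(τ ^ 2)⁻¹ • (y - postMean d τ ν x)‖ ≤ 2 * R * Real.sqrt d / τ ^ 2 := by
    intro x
    have hm := norm_postMean_le hτ (hsupp.mono hbox) x
    calc ‖(τ ^ 2)⁻¹ • (y - postMean d τ ν x)‖ = ‖y - postMean d τ ν x‖ / τ ^ 2 := by
          rw [norm_smul, norm_inv, Real.norm_of_nonneg (sq_nonneg τ), inv_mul_eq_div]
      _ ≤ (R * √d + R * √d) / τ ^ 2 := by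
          gcongr
          exact (norm_sub_le _ _).trans (add_le_add (hbox y hy) hm)
      _ = 2 * R * Real.sqrt d / τ ^ 2 := by ring
  exact ⟨fun x => (hgrad x).differentiableAt, fun x => (hgrad x).gradient,
    fun x => (hgrad x).gradient ▸ hbound x, lipschitzWith_of_hasGradientAt_of_norm_le hgrad hbound⟩

/-- The log-likelihood ratio `f_y(x) = log φ_{τ²}(x−y) − log p_{ν,τ}(x)` is differentiable with
gradient `(y − m_{ν,τ}(x))/τ²`, of norm at most `2R√d/τ²`; in particular it is
`(2R√d/τ²)`-Lipschitz. -/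
theorem stmt16 (d : ℕ) (hd : 1 ≤ d) (τ R : ℝ) (hτ : 0 < τ) (hR : 0 < R)
    (ν : Measure (EuclideanSpace ℝ (Fin d))) [IsProbabilityMeasure ν]
    (hsupp : ∀ᵐ y ∂ν, ∀ i, |y i| ≤ R)
    (y : EuclideanSpace ℝ (Fin d)) (hy : ∀ i, |y i| ≤ R) :
    Differentiable ℝ (fun x => Real.log (gphi d τ (x - y)) - Real.log (pdens d τ ν x)) ∧
    (∀ x, gradient (fun x => Real.log (gphi d τ (x - y)) - Real.log (pdens d τ ν x)) x
        = (τ ^ 2)⁻¹ • (y - postMean d τ ν x)) ∧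
    (∀ x, ‖gradient (fun x => Real.log (gphi d τ (x - y)) - Real.log (pdens d τ ν x)) x‖
        ≤ 2 * R * Real.sqrt d / τ ^ 2) ∧
    LipschitzWith (Real.toNNReal (2 * R * Real.sqrt d / τ ^ 2))
      (fun x => Real.log (gphi d τ (x - y)) - Real.log (pdens d τ ν x)) :=
  stmt16_general d τ R hτ hR ν hsupp y hy
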